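/- arXiv:2510.15529 — 2 statements merged into one kernel-verified Lean document; each statement's English description precedes it below -/
import Mathlib

section
/- For every integer d ≥ 1 and every l with 0 ≤ l ≤ d−1, the quantity ρ_l = 2(2(d−l)−1)(2d(d+1)^{l+1} − 2(d−l) + 1) / (d(d+1)^{l+1}) is maximized at l = 0, and ρ_0 = 2(2d−1)(2d²+1)/(d(d+1)) < 8d. -/
/-!
With `a = 2(d - l) - 1` and `X = d (d+1)^(l+1)` one has `ρ_l = 4a - 2a²/X ≤ 4a`. For `l ≥ 1` this
gives `ρ_l ≤ 4(2d - 3)`, while `(2d - 1)² < 4d(d+1)` makes the correction term at `l = 0` smaller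
than `8`, so `ρ_0 > 4(2d - 3)`; and `ρ_0 ≤ 4(2d - 1) < 8d`.
-/

/-- The paper's `ρ_l`: the congestion of an edge from layer `l` to layer `l + 1`. -/
noncomputable def congestion (d : ℝ) (l : ℕ) : ℝ :=
  2 * (2 * (d - l) - 1) * (2 * d * (d + 1) ^ (l + 1) - 2 * (d - l) + 1) / (d * (d + 1) ^ (l + 1))

lemma congestion_eq {d : ℝ} (hd : 0 < d) (l : ℕ) :
    congestion d l =
      4 * (2 * (d - l) - 1) - 2 * (2 * (d - l) - 1) ^ 2 / (d * (d + 1) ^ (l + 1)) := by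
  have hX : d * (d + 1) ^ (l + 1) ≠ 0 := by positivity
  rw [congestion, eq_sub_iff_add_eq, ← add_div, div_eq_iff hX]
  ring

lemma congestion_le {d : ℝ} (hd : 0 < d) (l : ℕ) : congestion d l ≤ 4 * (2 * (d - l) - 1) := by
  rw [congestion_eq hd]
  have : 0 ≤ 2 * (2 * (d - l) - 1) ^ 2 / (d * (d + 1) ^ (l + 1)) := by positivity
  linarith

lemma congestion_zero (d : ℝ) :
    congestion d 0 = 2 * (2 * d - 1) * (2 * d ^ 2 + 1) / (d * (d + 1)) := by
  simp only [congestion, Nat.cast_zero, sub_zero, zero_add, pow_one]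
  ring

lemma lt_congestion_zero {d : ℝ} (hd : 1 ≤ d) : 4 * (2 * d - 3) < congestion d 0 := by
  have hX : 0 < d * (d + 1) := by positivity
  have hcorr : 2 * (2 * d - 1) ^ 2 / (d * (d + 1)) < 8 := by
    rw [div_lt_iff₀ hX]
    nlinarith
  have := congestion_eq (by positivity) 0
  simp only [Nat.cast_zero, sub_zero, zero_add, pow_one] at this
  linarith

lemma congestion_le_congestion_zero {d : ℝ} (hd : 1 ≤ d) (l : ℕ) :
    congestion d l ≤ congestion d 0 := by
  rcases Nat.eq_zero_or_pos l with rfl | hl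
  · exact le_rfl
  · have hl : (1 : ℝ) ≤ l := by exact_mod_cast hl
    linarith [congestion_le (by positivity) l, lt_congestion_zero hd]

lemma congestion_zero_lt {d : ℝ} (hd : 0 < d) : congestion d 0 < 8 * d := by
  have := congestion_le hd 0
  simp only [Nat.cast_zero, sub_zero] at this
  linarith

/-- The congestion `ρ_l` of an edge from layer `l` to layer `l+1` is maximised
at `l = 0`, where it equals `2(2d-1)(2d²+1)/(d(d+1)) < 8d`. -/
theorem stmt_4 (d : ℕ) (hd : 1 ≤ d) (ρ : ℕ → ℝ)
    (hρ : ∀ l : ℕ, ρ l =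
      2 * (2 * ((d : ℝ) - l) - 1) * (2 * d * ((d : ℝ) + 1) ^ (l + 1) - 2 * ((d : ℝ) - l) + 1)
        / ((d : ℝ) * ((d : ℝ) + 1) ^ (l + 1))) :
    (∀ l : ℕ, l ≤ d - 1 → ρ l ≤ ρ 0) ∧
    ρ 0 = 2 * (2 * (d : ℝ) - 1) * (2 * (d : ℝ) ^ 2 + 1) / ((d : ℝ) * ((d : ℝ) + 1)) ∧
    ρ 0 < 8 * d := by
  have hρ : ρ = congestion d := funext hρ
  have hd : (1 : ℝ) ≤ d := by exact_mod_cast hd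
  subst hρ
  exact ⟨fun l _ ↦ congestion_le_congestion_zero hd l, congestion_zero d,
    congestion_zero_lt (by positivity)⟩
end

section
/- Hamming distance correctness of the tree-search branching step: let s, ŝ, t be strings of length n over an alphabet Σ with d_H(ŝ, t) ≤ d and d_H(s, t) > d. Let P be the set of positions p with s[p] ≠ t[p], and let P' ⊆ P be any subset of size d+1. Then there exists a position p ∈ P' with ŝ[p] = t[p], and for such a p, the string s' obtained from s by setting s'[p] = t[p] satisfies d_H(s', ŝ) = d_H(s, ŝ) − 1. -/
open Finset

section HammingUpdate

variable {ι : Type*} [Fintype ι] {β : ι → Type*} [∀ i, DecidableEq (β i)]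

theorem exists_mem_eq_of_hammingDist_lt_card {x y : ∀ i, β i} {S : Finset ι}
    (h : hammingDist x y < #S) : ∃ i ∈ S, x i = y i := by
  by_contra! hne
  have hS : S ⊆ ({i | x i ≠ y i} : Finset ι) := fun i hi =>
    mem_filter.mpr ⟨mem_univ i, hne i hi⟩
  exact (card_le_card hS).not_gt h

variable [DecidableEq ι]

theorem filter_update_ne_eq_erase {x y : ∀ i, β i} (p : ι) :
    ({i | Function.update x p (y p) i ≠ y i} : Finset ι) =
      ({i | x i ≠ y i} : Finset ι).erase p := by
  ext i
  rcases eq_or_ne i p with rfl | hi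
  · simp
  · simp [hi]

theorem hammingDist_update_add_one {x y : ∀ i, β i} {p : ι} (h : x p ≠ y p) :
    hammingDist (Function.update x p (y p)) y + 1 = hammingDist x y := by
  rw [hammingDist, filter_update_ne_eq_erase]
  exact card_erase_add_one (mem_filter.mpr ⟨mem_univ p, h⟩)

end HammingUpdate

theorem stmt_8_general {A : Type*} [DecidableEq A] (n d : ℕ)
    (s shat t : Fin n → A)
    (h1 : hammingDist shat t ≤ d)
    (P' : Finset (Fin n)) (hP' : ∀ p ∈ P', s p ≠ t p) (hcard : P'.card = d + 1) :
    ∃ p ∈ P', shat p = t p ∧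
      hammingDist (Function.update s p (t p)) shat + 1 = hammingDist s shat := by
  obtain ⟨p, hpP, hp⟩ := exists_mem_eq_of_hammingDist_lt_card (x := shat) (y := t)
    (S := P') (by omega)
  refine ⟨p, hpP, hp, ?_⟩
  have hs : s p ≠ shat p := hp ▸ hP' p hpP
  simpa only [hp] using hammingDist_update_add_one hs

/-- Correctness of the tree-search branching step: if `d_H(ŝ, t) ≤ d` and
`d_H(s, t) > d`, then among any `d+1` positions where `s` and `t` disagree
there is one where `ŝ` agrees with `t`, and substituting `t`'s character at
such a position brings `s` strictly closer to `ŝ`. -/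
theorem stmt_8 {A : Type*} [Fintype A] [DecidableEq A] (n d : ℕ)
    (s shat t : Fin n → A)
    (h1 : hammingDist shat t ≤ d) (h2 : d < hammingDist s t)
    (P' : Finset (Fin n)) (hP' : ∀ p ∈ P', s p ≠ t p) (hcard : P'.card = d + 1) :
    ∃ p ∈ P', shat p = t p ∧
      hammingDist (Function.update s p (t p)) shat + 1 = hammingDist s shat :=
  stmt_8_general n d s shat t h1 P' hP' hcard
end
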